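/- Let K₁ ≥ 0 and b ∈ ℝ. Then there exists a constant C > 0, depending only on K₁, b and f(𝟏), such that for every λ ∈ Γ satisfying Σ_{i=1}^n f_i(λ)λ_i ≥ −K₁(1 + Σ_{i=1}^n f_i(λ)) and f(λ) ≤ b, for every ε ∈ (0, 1], and for every index r ∈ {1,…,n}, one has Σ_{i=1}^n f_i(λ)|λ_i| ≤ ε Σ_{i ≠ r} f_i(λ)λ_i² + (C/ε) Σ_{i=1}^n f_i(λ) + C. -/

import Mathlib

open scoped BigOperators
open Set

noncomputable def fpart {n : ℕ} (f : EuclideanSpace ℝ (Fin n) → ℝ)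
    (l : EuclideanSpace ℝ (Fin n)) (i : Fin n) : ℝ :=
  fderiv ℝ f l (EuclideanSpace.single i (1 : ℝ))

noncomputable def gradf {n : ℕ} (f : EuclideanSpace ℝ (Fin n) → ℝ)
    (l : EuclideanSpace ℝ (Fin n)) : EuclideanSpace ℝ (Fin n) :=
  WithLp.toLp 2 (fun i => fpart f l i)

/-- Unit normal to the level surface of `f` through `l`. -/
noncomputable def nuf {n : ℕ} (f : EuclideanSpace ℝ (Fin n) → ℝ)
    (l : EuclideanSpace ℝ (Fin n)) : EuclideanSpace ℝ (Fin n) :=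
  ‖gradf f l‖⁻¹ • gradf f l

/-- `(μ̂ - λ̂) ⬝ ν̂_λ̂` where `ν̂_λ̂ = (Df(λ), -1)/√(1+|Df(λ)|²)`. -/
noncomputable def dotNu {n : ℕ} (f : EuclideanSpace ℝ (Fin n) → ℝ)
    (mu lp : EuclideanSpace ℝ (Fin n) × ℝ) : ℝ :=
  (∑ i, fpart f lp.1 i * (mu.1 i - lp.1 i) - (mu.2 - lp.2)) /
    Real.sqrt (1 + ‖gradf f lp.1‖ ^ 2)

/-- `Σ^σ = {(λ,p) ∈ Γ×ℝ : f(λ) - p > σ}`. -/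
def SigmaGt {n : ℕ} (f : EuclideanSpace ℝ (Fin n) → ℝ)
    (Γ : Set (EuclideanSpace ℝ (Fin n))) (σ : ℝ) :
    Set (EuclideanSpace ℝ (Fin n) × ℝ) :=
  {lp | lp.1 ∈ Γ ∧ σ < f lp.1 - lp.2}

/-- `∂Σ^σ = {(λ,p) ∈ Γ×ℝ : f(λ) - p = σ}`. -/
def SigmaBd {n : ℕ} (f : EuclideanSpace ℝ (Fin n) → ℝ)
    (Γ : Set (EuclideanSpace ℝ (Fin n))) (σ : ℝ) :
    Set (EuclideanSpace ℝ (Fin n) × ℝ) :=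
  {lp | lp.1 ∈ Γ ∧ f lp.1 - lp.2 = σ}

/-- `Ŝ^σ_μ̂ = {λ̂ ∈ ∂Σ^σ : (μ̂ - λ̂)·ν̂_λ̂ ≤ 0}`. -/
def Shat {n : ℕ} (f : EuclideanSpace ℝ (Fin n) → ℝ)
    (Γ : Set (EuclideanSpace ℝ (Fin n))) (σ : ℝ)
    (mu : EuclideanSpace ℝ (Fin n) × ℝ) : Set (EuclideanSpace ℝ (Fin n) × ℝ) :=
  {lp | lp ∈ SigmaBd f Γ σ ∧ dotNu f mu lp ≤ 0}

/-- `ℬ_σ⁺`. -/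
def Bplus {n : ℕ} (f : EuclideanSpace ℝ (Fin n) → ℝ)
    (Γ : Set (EuclideanSpace ℝ (Fin n))) (σ : ℝ) :
    Set (EuclideanSpace ℝ (Fin n) × ℝ) :=
  {mu | mu.1 ∈ Γ ∧ ∀ a : ℝ, IsCompact (Shat f Γ σ mu ∩ Γ ×ˢ ({a} : Set ℝ))}

/-- `V^σ = ℬ_σ⁺ \ Σ^σ`. -/
def Vsig {n : ℕ} (f : EuclideanSpace ℝ (Fin n) → ℝ)
    (Γ : Set (EuclideanSpace ℝ (Fin n))) (σ : ℝ) :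
    Set (EuclideanSpace ℝ (Fin n) × ℝ) :=
  Bplus f Γ σ \ SigmaGt f Γ σ

/-- `ℬ_σ⁺(μ̂) = {tλ̂ + (1-t)μ̂ : λ̂ ∈ Ŝ^σ_μ̂, 0 ≤ t ≤ 1}`. -/
def BplusOf {n : ℕ} (f : EuclideanSpace ℝ (Fin n) → ℝ)
    (Γ : Set (EuclideanSpace ℝ (Fin n))) (σ : ℝ)
    (mu : EuclideanSpace ℝ (Fin n) × ℝ) : Set (EuclideanSpace ℝ (Fin n) × ℝ) :=
  {x | ∃ lp ∈ Shat f Γ σ mu, ∃ t ∈ Set.Icc (0:ℝ) 1, x = t • lp + (1 - t) • mu}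

/-- `f̃(λ,p) = f(λ) - p`. -/
def ftilde {n : ℕ} (f : EuclideanSpace ℝ (Fin n) → ℝ)
    (lp : EuclideanSpace ℝ (Fin n) × ℝ) : ℝ :=
  f lp.1 - lp.2

/-- `max_{0≤t≤1} f̃(tμ̂ + (1-t)λ̂)`. -/
noncomputable def segMax {n : ℕ} (f : EuclideanSpace ℝ (Fin n) → ℝ)
    (mu lp : EuclideanSpace ℝ (Fin n) × ℝ) : ℝ :=
  sSup ((fun t : ℝ => ftilde f (t • mu + (1 - t) • lp)) '' Set.Icc (0:ℝ) 1)

/-- `Θ_R(μ̂)`. -/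
noncomputable def Theta {n : ℕ} (f : EuclideanSpace ℝ (Fin n) → ℝ)
    (Γ : Set (EuclideanSpace ℝ (Fin n))) (σ δ : ℝ)
    (mu : EuclideanSpace ℝ (Fin n) × ℝ) (R : ℝ) : ℝ :=
  sInf ((fun lp => segMax f mu lp - σ) ''
    {lp | lp ∈ SigmaBd f Γ σ ∧ ‖lp.1‖ = R ∧ |lp.2 - mu.2| ≤ δ})

/-- `N_μ̂ = 2·max{|λ| : (λ,p) ∈ Ŝ^σ_μ̂ ∩ (Γ × [q-δ, q+δ])}` (as `sSup`). -/
noncomputable def NmuD {n : ℕ} (f : EuclideanSpace ℝ (Fin n) → ℝ)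
    (Γ : Set (EuclideanSpace ℝ (Fin n))) (σ δ : ℝ)
    (mu : EuclideanSpace ℝ (Fin n) × ℝ) : ℝ :=
  2 * sSup ((fun lp => ‖lp.1‖) ''
    (Shat f Γ σ mu ∩ Γ ×ˢ Set.Icc (mu.2 - δ) (mu.2 + δ)))

section Aux


lemma my_grad_ineq {n : ℕ} {Γ : Set (EuclideanSpace ℝ (Fin n))}
    {f : EuclideanSpace ℝ (Fin n) → ℝ} (hfcc : ConcaveOn ℝ Γ f)
    {x y : EuclideanSpace ℝ (Fin n)} (hx : x ∈ Γ) (hy : y ∈ Γ)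
    (hd : DifferentiableAt ℝ f x) :
    f y ≤ f x + fderiv ℝ f x (y - x) := by
  set c : ℝ →ᵃ[ℝ] EuclideanSpace ℝ (Fin n) := AffineMap.lineMap x y with hc
  have hcc : ConcaveOn ℝ (c ⁻¹' Γ) (f ∘ c) := hfcc.comp_affineMap c
  have h0 : (0:ℝ) ∈ c ⁻¹' Γ := by simp [hc, hx]
  have h1 : (1:ℝ) ∈ c ⁻¹' Γ := by simp [hc, hy]
  have hcd : HasDerivAt (fun t : ℝ => c t) (y - x) 0 := by
    have : HasDerivAt (fun t : ℝ => t • (y - x) + x) ((1:ℝ) • (y - x)) 0 :=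
      ((hasDerivAt_id (0:ℝ)).smul_const (y - x)).add_const x
    simpa [hc, AffineMap.lineMap_apply] using this
  have hder : HasDerivAt (f ∘ c) (fderiv ℝ f x (y - x)) 0 := by
    have hfx : HasFDerivAt f (fderiv ℝ f x) (c 0) := by
      simpa [hc] using hd.hasFDerivAt
    exact hfx.comp_hasDerivAt 0 hcd
  have hsl := hcc.slope_le_of_hasDerivAt h0 h1 one_pos hder
  have hs : slope (f ∘ c) 0 1 = f y - f x := by
    simp [slope, hc]
  rw [hs] at hsl
  linarith

lemma my_fderiv_sum {n : ℕ} (f : EuclideanSpace ℝ (Fin n) → ℝ)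
    (x v : EuclideanSpace ℝ (Fin n)) :
    fderiv ℝ f x v = ∑ i, fderiv ℝ f x (EuclideanSpace.single i (1:ℝ)) * v i := by
  have hv : v = ∑ i, v i • EuclideanSpace.single i (1:ℝ) := by
    ext j
    rw [show (∑ i, v i • EuclideanSpace.single i (1:ℝ)) j
        = ∑ i, (v i • EuclideanSpace.single i (1:ℝ)) j from by rw [WithLp.ofLp_sum]; exact Finset.sum_apply j _ _]
    simp [EuclideanSpace.single_apply]
  conv_lhs => rw [hv]
  rw [map_sum]
  simp [mul_comm]

end Aux

set_option maxHeartbeats 1000000 in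
theorem stmt_18
    {n : ℕ} (hn : 2 ≤ n) (Γ : Set (EuclideanSpace ℝ (Fin n)))
    (hΓo : IsOpen Γ) (hΓcx : Convex ℝ Γ)
    (hΓcone : ∀ l ∈ Γ, ∀ t : ℝ, 0 < t → t • l ∈ Γ)
    (hΓsym : ∀ (π : Equiv.Perm (Fin n)), ∀ l ∈ Γ,
      (WithLp.toLp 2 (fun i => l (π i)) : EuclideanSpace ℝ (Fin n)) ∈ Γ)
    (hΓn : {l : EuclideanSpace ℝ (Fin n) | ∀ i, 0 < l i} ⊆ Γ)
    (f : EuclideanSpace ℝ (Fin n) → ℝ)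
    (hfsm : ContDiffOn ℝ (⊤ : ℕ∞) f Γ)
    (hfsym : ∀ (π : Equiv.Perm (Fin n)), ∀ l ∈ Γ,
      f (WithLp.toLp 2 (fun i => l (π i))) = f l)
    (hfpos : ∀ l ∈ Γ, ∀ i, 0 < fpart f l i)
    (hfcc : ConcaveOn ℝ Γ f)
    (K₁ : ℝ) (hK₁ : 0 ≤ K₁) (b : ℝ) :
    ∃ C > (0:ℝ), ∀ l ∈ Γ,
      (∑ i, fpart f l i * l i ≥ -K₁ * (1 + ∑ i, fpart f l i)) → f l ≤ b →
      ∀ ε : ℝ, 0 < ε → ε ≤ 1 → ∀ r : Fin n,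
        ∑ i, fpart f l i * |l i| ≤
          ε * ∑ i ∈ Finset.univ.erase r, fpart f l i * l i ^ 2 +
          (C / ε) * ∑ i, fpart f l i + C := by
  set o : EuclideanSpace ℝ (Fin n) := WithLp.toLp 2 (fun _ => (1:ℝ)) with ho
  have hoΓ : o ∈ Γ := hΓn (fun i => one_pos)
  refine ⟨6 + 4*K₁ + |b - f o|, by positivity, ?_⟩
  intro l hl hlow hfb ε hε hε1 r
  have hd : DifferentiableAt ℝ f l :=
    (hfsm.differentiableOn (by simp)).differentiableAt (hΓo.mem_nhds hl)
  set a : Fin n → ℝ := fpart f l with ha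
  have hap : ∀ i, 0 < a i := hfpos l hl
  set S := ∑ i, a i with hS
  have hS0 : 0 ≤ S := Finset.sum_nonneg fun i _ => (hap i).le
  set T := ∑ i, a i * l i with hT
  set M := ∑ i ∈ Finset.univ.erase r, a i * |l i| with hM
  set Q := ∑ i ∈ Finset.univ.erase r, a i * l i ^ 2 with hQ
  have hM0 : 0 ≤ M :=
    Finset.sum_nonneg fun i _ => mul_nonneg (hap i).le (abs_nonneg _)
  -- upper bound on T from concavity
  have hTub : T ≤ (b - f o) + S := by
    have hgr := my_grad_ineq hfcc hl hoΓ hd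
    have hfd : fderiv ℝ f l (o - l) = S - T := by
      rw [my_fderiv_sum]
      have : ∀ i : Fin n, a i * (o - l) i = a i - a i * l i := by
        intro i
        have : (o - l) i = 1 - l i := by
          simp [ho, PiLp.sub_apply]
        rw [this]; ring
      calc ∑ i, fderiv ℝ f l (EuclideanSpace.single i (1:ℝ)) * (o - l) i
          = ∑ i, (a i - a i * l i) := Finset.sum_congr rfl fun i _ => this i
        _ = S - T := by rw [Finset.sum_sub_distrib]
    rw [hfd] at hgr
    linarith
  -- split of the full sum
  have hsplitA : ∑ i, a i * |l i| = T + ∑ i, a i * (|l i| - l i) := by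
    rw [hT, ← Finset.sum_add_distrib]
    exact Finset.sum_congr rfl fun i _ => by ring
  set N := ∑ i, a i * (|l i| - l i) with hN
  have hNsplit : N = a r * (|l r| - l r)
      + ∑ i ∈ Finset.univ.erase r, a i * (|l i| - l i) :=
    (Finset.add_sum_erase _ _ (Finset.mem_univ r)).symm
  have hTsplit : T = a r * l r + ∑ i ∈ Finset.univ.erase r, a i * l i :=
    (Finset.add_sum_erase _ _ (Finset.mem_univ r)).symm
  have hMle : ∑ i ∈ Finset.univ.erase r, a i * l i ≤ M :=
    Finset.sum_le_sum fun i _ =>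
      mul_le_mul_of_nonneg_left (le_abs_self _) (hap i).le
  have hK₁S : 0 ≤ K₁ * (1 + S) := mul_nonneg hK₁ (by linarith)
  have hrbound : a r * (|l r| - l r) ≤ 2 * (M + K₁ * (1 + S)) := by
    rcases le_or_gt 0 (l r) with h | h
    · rw [abs_of_nonneg h]
      simp only [sub_self, mul_zero]
      linarith
    · rw [abs_of_neg h]
      have hlow' : a r * l r + ∑ i ∈ Finset.univ.erase r, a i * l i
          ≥ -K₁ * (1 + S) := by rw [← hTsplit]; exact hlow
      nlinarith [hMle]
  have herest : ∑ i ∈ Finset.univ.erase r, a i * (|l i| - l i) ≤ 2 * M := by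
    rw [hM, Finset.mul_sum]
    refine Finset.sum_le_sum fun i _ => ?_
    have : |l i| - l i ≤ 2 * |l i| := by
      have := neg_abs_le (l i); linarith
    nlinarith [(hap i).le, abs_nonneg (l i)]
  have hMbound : 4 * M ≤ ε * Q + (4/ε) * S := by
    have h1 : 4 * M ≤ ε * Q + (4/ε) * ∑ i ∈ Finset.univ.erase r, a i := by
      rw [hM, hQ, Finset.mul_sum, Finset.mul_sum, Finset.mul_sum,
        ← Finset.sum_add_distrib]
      refine Finset.sum_le_sum fun i _ => ?_
      rw [← sq_abs (l i)]
      have key : 4 * (a i * |l i|) * ε ≤ (ε * (a i * |l i| ^ 2) + 4/ε * a i) * ε := by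
        have h4 : 4/ε * a i * ε = 4 * a i := by field_simp
        nlinarith [mul_nonneg (hap i).le (sq_nonneg (ε * |l i| - 2))]
      exact le_of_mul_le_mul_right key hε
    have h2 : ∑ i ∈ Finset.univ.erase r, a i ≤ S := by
      rw [hS]
      exact Finset.sum_le_sum_of_subset_of_nonneg
        (Finset.erase_subset _ _) (fun i _ _ => (hap i).le)
    have h3 : (0:ℝ) ≤ 4/ε := by positivity
    calc 4 * M ≤ ε * Q + (4/ε) * ∑ i ∈ Finset.univ.erase r, a i := h1
      _ ≤ ε * Q + (4/ε) * S := by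
          exact add_le_add_right (mul_le_mul_of_nonneg_left h2 h3) _
  -- final combination
  have hA : ∑ i, a i * |l i| ≤ ε * Q + (4/ε) * S + (b - f o) + S
      + 2 * K₁ * (1 + S) := by
    rw [hsplitA]
    have : N ≤ 4 * M + 2 * K₁ * (1 + S) := by
      rw [hNsplit]; linarith
    linarith
  set u : ℝ := ε⁻¹ with hu
  have hu1 : 1 ≤ u := one_le_inv_iff₀.mpr ⟨hε, hε1⟩
  have hu0 : (0:ℝ) ≤ u := by linarith
  have hdiv4 : 4/ε = 4 * u := by rw [hu, div_eq_mul_inv]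
  have hdivC : (6 + 4*K₁ + |b - f o|)/ε = (6 + 4*K₁ + |b - f o|) * u := by
    rw [hu, div_eq_mul_inv]
  rw [hdivC]
  rw [hdiv4] at hA
  have habs := le_abs_self (b - f o)
  have habs0 := abs_nonneg (b - f o)
  have hP : S ≤ u * S := by
    simpa using mul_le_mul_of_nonneg_right hu1 hS0
  have hKP : K₁ * S ≤ K₁ * (u * S) := mul_le_mul_of_nonneg_left hP hK₁
  have hP0 : (0:ℝ) ≤ u * S := mul_nonneg hu0 hS0
  have hKP0 : (0:ℝ) ≤ K₁ * (u * S) := mul_nonneg hK₁ hP0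
  have hA0P : (0:ℝ) ≤ |b - f o| * (u * S) := mul_nonneg habs0 hP0
  linarith [hA, habs, hP, hKP, hP0, hKP0, hA0P]
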